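/- Let V be a unitary matrix on ℂ^d ⊗ ℂ^k, let ρ be a faithful density matrix on ℂ^d and σ a faithful density matrix on ℂ^k. Define ρ' = tr_a(V (ρ ⊗ σ) V*) and 𝓕σ = tr_s(V (ρ ⊗ σ) V*), and assume ρ' and 𝓕σ are faithful. Then S(ρ') − S(ρ) + tr((σ − 𝓕σ) · log σ) ≥ 0. -/

import Mathlib

open Matrix Kronecker BigOperators
open scoped ComplexOrder

/-- Matrix logarithm via the spectral functional calculus (junk value `0` off Hermitian matrices). -/
noncomputable def matLog {n : Type*} [Fintype n] [DecidableEq n]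
    (A : Matrix n n ℂ) : Matrix n n ℂ :=
  if h : A.IsHermitian then
    (h.eigenvectorUnitary : Matrix n n ℂ) *
      Matrix.diagonal (fun i => (Real.log (h.eigenvalues i) : ℂ)) *
      (star h.eigenvectorUnitary : Matrix n n ℂ)
  else 0

/-- von Neumann entropy  S(ρ) = −tr(ρ log ρ). -/
noncomputable def vnEntropy {n : Type*} [Fintype n] [DecidableEq n] (A : Matrix n n ℂ) : ℝ :=
  (-(A * matLog A).trace).re

/-- Quantum relative entropy  D(ρ‖σ) = tr(ρ log ρ) − tr(ρ log σ). -/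
noncomputable def relEnt {n : Type*} [Fintype n] [DecidableEq n] (ρ σ : Matrix n n ℂ) : ℝ :=
  ((ρ * matLog ρ).trace - (ρ * matLog σ).trace).re

/-- A density matrix: positive semidefinite with unit trace. -/
def IsDensityMatrix {n : Type*} [Fintype n] (ρ : Matrix n n ℂ) : Prop :=
  ρ.PosSemidef ∧ ρ.trace = 1

/-- A faithful density matrix: positive definite with unit trace. -/
def IsFaithfulDensityMatrix {n : Type*} [Fintype n] (ρ : Matrix n n ℂ) : Prop :=
  ρ.PosDef ∧ ρ.trace = 1

/-- Partial trace over the ancilla (second factor). -/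
noncomputable def trA {d k : ℕ} (X : Matrix (Fin d × Fin k) (Fin d × Fin k) ℂ) :
    Matrix (Fin d) (Fin d) ℂ :=
  Matrix.of fun i i' => ∑ j : Fin k, X (i, j) (i', j)

/-- Partial trace over the system (first factor). -/
noncomputable def trS {d k : ℕ} (X : Matrix (Fin d × Fin k) (Fin d × Fin k) ℂ) :
    Matrix (Fin k) (Fin k) ℂ :=
  Matrix.of fun j j' => ∑ i : Fin d, X (i, j) (i, j')

/-- Unconditional one-step map  𝓥_s(ρ) = tr_a(V (ρ ⊗ σ) V*). -/
noncomputable def Vs {d k : ℕ} (V : Matrix (Fin d × Fin k) (Fin d × Fin k) ℂ)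
    (σ : Matrix (Fin k) (Fin k) ℂ) (ρ : Matrix (Fin d) (Fin d) ℂ) :
    Matrix (Fin d) (Fin d) ℂ :=
  trA (V * (ρ ⊗ₖ σ) * Vᴴ)

/-- Measurement map  𝓜_y(ρ) = tr_a((1 ⊗ M_y) V (ρ ⊗ σ) V* (1 ⊗ M_y)*). -/
noncomputable def Meas {d k : ℕ} (V : Matrix (Fin d × Fin k) (Fin d × Fin k) ℂ)
    (σ : Matrix (Fin k) (Fin k) ℂ) (M : Matrix (Fin k) (Fin k) ℂ)
    (ρ : Matrix (Fin d) (Fin d) ℂ) : Matrix (Fin d) (Fin d) ℂ :=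
  trA ((((1 : Matrix (Fin d) (Fin d) ℂ)) ⊗ₖ M) * (V * (ρ ⊗ₖ σ) * Vᴴ) *
      (((1 : Matrix (Fin d) (Fin d) ℂ)) ⊗ₖ M)ᴴ)

/-- The unnormalized conditioned state  𝓜_{y_m} ∘ ⋯ ∘ 𝓜_{y_1}(ρ₀). -/
noncomputable def measChain {d k : ℕ} {Y : Type} (V : Matrix (Fin d × Fin k) (Fin d × Fin k) ℂ)
    (σ : Matrix (Fin k) (Fin k) ℂ) (M : Y → Matrix (Fin k) (Fin k) ℂ)
    (ρ₀ : Matrix (Fin d) (Fin d) ℂ) : (m : ℕ) → (Fin m → Y) → Matrix (Fin d) (Fin d) ℂ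
  | 0, _ => ρ₀
  | (m + 1), y => Meas V σ (M (y (Fin.last m))) (measChain V σ M ρ₀ m (fun i => y i.castSucc))

/-- The probability  p_m(y)  of the record y. -/
noncomputable def recProb {d k : ℕ} {Y : Type} (V : Matrix (Fin d × Fin k) (Fin d × Fin k) ℂ)
    (σ : Matrix (Fin k) (Fin k) ℂ) (M : Y → Matrix (Fin k) (Fin k) ℂ)
    (ρ₀ : Matrix (Fin d) (Fin d) ℂ) (m : ℕ) (y : Fin m → Y) : ℝ :=
  (measChain V σ M ρ₀ m y).trace.re

/-- The conditional state  ρ̂_{n|m}(y) = 𝓥_s^{n−m}(𝓜_{y_m} ∘ ⋯ ∘ 𝓜_{y_1}(ρ₀)) / p_m(y). -/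
noncomputable def condState {d k : ℕ} {Y : Type} (V : Matrix (Fin d × Fin k) (Fin d × Fin k) ℂ)
    (σ : Matrix (Fin k) (Fin k) ℂ) (M : Y → Matrix (Fin k) (Fin k) ℂ)
    (ρ₀ : Matrix (Fin d) (Fin d) ℂ) (n m : ℕ) (y : Fin m → Y) :
    Matrix (Fin d) (Fin d) ℂ :=
  ((recProb V σ M ρ₀ m y : ℂ))⁻¹ • (Vs V σ)^[n - m] (measChain V σ M ρ₀ m y)

/-- The unconditional state  ρ_n = 𝓥_s^n(ρ₀). -/
noncomputable def uncondState {d k : ℕ} (V : Matrix (Fin d × Fin k) (Fin d × Fin k) ℂ)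
    (σ : Matrix (Fin k) (Fin k) ℂ) (ρ₀ : Matrix (Fin d) (Fin d) ℂ) (n : ℕ) :
    Matrix (Fin d) (Fin d) ℂ :=
  (Vs V σ)^[n] ρ₀

/-- The average conditional entropy  S̄_{n|m}. -/
noncomputable def avgCondEntropy {d k : ℕ} {Y : Type} [Fintype Y]
    (V : Matrix (Fin d × Fin k) (Fin d × Fin k) ℂ)
    (σ : Matrix (Fin k) (Fin k) ℂ) (M : Y → Matrix (Fin k) (Fin k) ℂ)
    (ρ₀ : Matrix (Fin d) (Fin d) ℂ) (n m : ℕ) : ℝ :=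
  ∑ y : Fin m → Y, recProb V σ M ρ₀ m y * vnEntropy (condState V σ M ρ₀ n m y)

/-- The Holevo information  H_{n|m} = S(ρ_n) − S̄_{n|m}. -/
noncomputable def holevoInfo {d k : ℕ} {Y : Type} [Fintype Y]
    (V : Matrix (Fin d × Fin k) (Fin d × Fin k) ℂ)
    (σ : Matrix (Fin k) (Fin k) ℂ) (M : Y → Matrix (Fin k) (Fin k) ℂ)
    (ρ₀ : Matrix (Fin d) (Fin d) ℂ) (n m : ℕ) : ℝ :=
  vnEntropy (uncondState V σ ρ₀ n) - avgCondEntropy V σ M ρ₀ n m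

/-!
Put `ω = V (ρ ⊗ σ) V*`. Entropy is invariant under unitary conjugation and additive on tensor
products, so `S(ω) = S(ρ) + S(σ)`; and `log (ρ' ⊗ σ) = log ρ' ⊗ 1 + 1 ⊗ log σ` gives
`tr (ω log (ρ' ⊗ σ)) = -S(ρ') + tr (𝓕σ log σ)`. The claimed inequality is therefore Klein's
inequality `D(ω ‖ ρ' ⊗ σ) ≥ 0`. To prove the latter, expand both matrices in their eigenbases:
the squared overlaps of two orthonormal bases form a doubly stochastic matrix, which reduces
the inequality to the scalar one `p - q ≤ p log p - p log q`.
-/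

section Spectral

variable {n : Type*} [Fintype n] [DecidableEq n]

lemma diagonal_comp_mul_eq_mul_diagonal_comp {a b : n → ℝ} {W : Matrix n n ℂ}
    (h : diagonal (fun i => (a i : ℂ)) * W = W * diagonal (fun i => (b i : ℂ))) (f : ℝ → ℝ) :
    diagonal (fun i => (f (a i) : ℂ)) * W = W * diagonal (fun i => (f (b i) : ℂ)) := by
  ext i j
  have hij := congrFun (congrFun h i) j
  simp only [diagonal_mul, mul_diagonal] at hij ⊢
  -- `W i j ≠ 0` forces `a i = b j`
  obtain h0 | hab := mul_eq_zero.mp (show ((a i : ℂ) - b j) * W i j = 0 by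
    rw [sub_mul, hij, mul_comm, sub_self])
  · rw [Complex.ofReal_inj.mp (sub_eq_zero.mp h0), mul_comm]
  · simp [hab]

/-- A matrix determines `f` applied to its eigenvalues, whichever unitary diagonalizes it. -/
lemma unitary_conj_diagonal_comp_eq {U U₀ : Matrix n n ℂ} (hU : U ∈ unitaryGroup n ℂ)
    (hU₀ : U₀ ∈ unitaryGroup n ℂ) {a b : n → ℝ}
    (h : U * diagonal (fun i => (a i : ℂ)) * Uᴴ = U₀ * diagonal (fun i => (b i : ℂ)) * U₀ᴴ)
    (f : ℝ → ℝ) :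
    U * diagonal (fun i => (f (a i) : ℂ)) * Uᴴ = U₀ * diagonal (fun i => (f (b i) : ℂ)) * U₀ᴴ := by
  have hUU : Uᴴ * U = 1 := hU.1
  have hUU' : U * Uᴴ = 1 := hU.2
  have hU₀U₀ : U₀ * U₀ᴴ = 1 := hU₀.2
  have hU₀U₀' : U₀ᴴ * U₀ = 1 := hU₀.1
  have hcomm : diagonal (fun i => (a i : ℂ)) * (Uᴴ * U₀)
      = (Uᴴ * U₀) * diagonal (fun i => (b i : ℂ)) := by
    calc _ = Uᴴ * (U * diagonal (fun i => (a i : ℂ)) * Uᴴ) * U₀ := by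
          simp only [mul_assoc]; rw [← mul_assoc Uᴴ U, hUU, one_mul]
      _ = Uᴴ * (U₀ * diagonal (fun i => (b i : ℂ)) * U₀ᴴ) * U₀ := by rw [h]
      _ = _ := by simp only [mul_assoc]; rw [hU₀U₀', mul_one]
  calc U * diagonal (fun i => (f (a i) : ℂ)) * Uᴴ
      = U * (diagonal (fun i => (f (a i) : ℂ)) * (Uᴴ * U₀)) * U₀ᴴ := by
        simp only [mul_assoc]; rw [hU₀U₀, mul_one]
    _ = U₀ * diagonal (fun i => (f (b i) : ℂ)) * U₀ᴴ := by
        rw [diagonal_comp_mul_eq_mul_diagonal_comp hcomm, ← mul_assoc, ← mul_assoc, hUU', one_mul]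

lemma Matrix.IsHermitian.exists_unitary_conj_diagonal {A : Matrix n n ℂ} (hA : A.IsHermitian) :
    ∃ U ∈ unitaryGroup n ℂ, A = U * diagonal (fun i => (hA.eigenvalues i : ℂ)) * Uᴴ :=
  ⟨_, hA.eigenvectorUnitary.2, hA.spectral_theorem⟩

lemma Matrix.PosSemidef.exists_unitary_conj_diagonal {A : Matrix n n ℂ} (hA : A.PosSemidef) :
    ∃ U ∈ unitaryGroup n ℂ, ∃ p : n → ℝ, (∀ i, 0 ≤ p i) ∧
      A = U * diagonal (fun i => (p i : ℂ)) * Uᴴ :=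
  let ⟨U, hU, hAU⟩ := hA.isHermitian.exists_unitary_conj_diagonal
  ⟨U, hU, _, hA.eigenvalues_nonneg, hAU⟩

lemma Matrix.PosDef.exists_unitary_conj_diagonal {A : Matrix n n ℂ} (hA : A.PosDef) :
    ∃ U ∈ unitaryGroup n ℂ, ∃ p : n → ℝ, (∀ i, 0 < p i) ∧
      A = U * diagonal (fun i => (p i : ℂ)) * Uᴴ :=
  let ⟨U, hU, hAU⟩ := hA.isHermitian.exists_unitary_conj_diagonal
  ⟨U, hU, _, hA.eigenvalues_pos, hAU⟩

lemma isHermitian_unitary_conj_diagonal (U : Matrix n n ℂ) (c : n → ℝ) :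
    (U * diagonal (fun i => (c i : ℂ)) * Uᴴ).IsHermitian := by
  refine isHermitian_mul_mul_conjTranspose U ?_
  simp [IsHermitian, diagonal_conjTranspose, Pi.star_def]

lemma matLog_unitary_conj_diagonal {U : Matrix n n ℂ} (hU : U ∈ unitaryGroup n ℂ) (c : n → ℝ) :
    matLog (U * diagonal (fun i => (c i : ℂ)) * Uᴴ)
      = U * diagonal (fun i => (Real.log (c i) : ℂ)) * Uᴴ := by
  have hA := isHermitian_unitary_conj_diagonal U c
  rw [matLog, dif_pos hA]
  exact unitary_conj_diagonal_comp_eq hA.eigenvectorUnitary.2 hU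
    hA.spectral_theorem.symm Real.log

end Spectral

section Klein

variable {n : Type*} [Fintype n] [DecidableEq n]

lemma unitary_conj_mul_unitary_conj {U : Matrix n n ℂ} (hU : U ∈ unitaryGroup n ℂ)
    (X Y : Matrix n n ℂ) : (U * X * Uᴴ) * (U * Y * Uᴴ) = U * (X * Y) * Uᴴ := by
  have hUU : Uᴴ * U = 1 := hU.1
  simp only [mul_assoc]
  rw [← mul_assoc Uᴴ U, hUU, one_mul]

lemma trace_unitary_conj {U : Matrix n n ℂ} (hU : U ∈ unitaryGroup n ℂ) (A : Matrix n n ℂ) :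
    (U * A * Uᴴ).trace = A.trace := by
  have hUU : Uᴴ * U = 1 := hU.1
  rw [trace_mul_comm, ← mul_assoc, hUU, one_mul]

lemma trace_diagonal_mul_diagonal_mul_conjTranspose (M : Matrix n n ℂ) (a b : n → ℝ) :
    (diagonal (fun i => (a i : ℂ)) * M * diagonal (fun i => (b i : ℂ)) * Mᴴ).trace
      = ∑ i, ∑ j, a i * b j * Complex.normSq (M i j) := by
  rw [trace, Complex.ofReal_sum]
  refine Finset.sum_congr rfl fun i _ => ?_
  rw [diag_apply, mul_apply, Complex.ofReal_sum]
  refine Finset.sum_congr rfl fun j _ => ?_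
  rw [mul_diagonal, diagonal_mul, conjTranspose_apply, Complex.ofReal_mul,
    Complex.normSq_eq_conj_mul_self, Complex.star_def]
  push_cast
  ring

lemma trace_unitary_conj_diagonal_mul {U W : Matrix n n ℂ} (hU : U ∈ unitaryGroup n ℂ)
    (a b : n → ℝ) :
    ((U * diagonal (fun i => (a i : ℂ)) * Uᴴ) * (W * diagonal (fun i => (b i : ℂ)) * Wᴴ)).trace
      = ∑ i, ∑ j, a i * b j * Complex.normSq ((Uᴴ * W) i j) := by
  have hUU' : U * Uᴴ = 1 := hU.2
  rw [← trace_diagonal_mul_diagonal_mul_conjTranspose,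
    ← trace_unitary_conj hU (_ * _ * _ * (Uᴴ * W)ᴴ)]
  simp only [conjTranspose_mul, conjTranspose_conjTranspose, mul_assoc, hUU', mul_one]

lemma normSq_mem_doublyStochastic {U : Matrix n n ℂ} (hU : U ∈ unitaryGroup n ℂ) :
    of (fun i j => Complex.normSq (U i j)) ∈ doublyStochastic ℝ n := by
  have hUU : Uᴴ * U = 1 := hU.1
  have hUU' : U * Uᴴ = 1 := hU.2
  refine mem_doublyStochastic_iff_sum.mpr ⟨fun i j => Complex.normSq_nonneg _, fun i => ?_,
    fun j => ?_⟩ <;> simp only [of_apply] <;> apply Complex.ofReal_injective <;> push_cast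
  · simpa [mul_apply, Complex.normSq_eq_conj_mul_self, mul_comm] using congrFun (congrFun hUU' i) i
  · simpa [mul_apply, Complex.normSq_eq_conj_mul_self] using congrFun (congrFun hUU j) j

lemma sub_le_mul_log_sub_mul_log {p q : ℝ} (hp : 0 ≤ p) (hq : 0 < q) :
    p - q ≤ p * Real.log p - p * Real.log q := by
  rcases hp.eq_or_lt with rfl | hp
  · simpa using hq.le
  have h := Real.self_sub_one_le_mul_log (div_nonneg hp.le hq.le)
  rw [Real.log_div hp.ne' hq.ne'] at h
  have := mul_le_mul_of_nonneg_left h hq.le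
  field_simp at this
  linarith

/-- Klein's inequality in coordinates: `c` is the matrix of overlaps `|⟨eᵢ, fⱼ⟩|²` of the
two eigenbases. -/
lemma sum_mul_log_le_of_mem_doublyStochastic {c : Matrix n n ℝ} (hc : c ∈ doublyStochastic ℝ n)
    {p q : n → ℝ} (hp : ∀ i, 0 ≤ p i) (hq : ∀ j, 0 < q j) (hpq : ∑ i, p i = ∑ j, q j) :
    ∑ i, ∑ j, p i * Real.log (q j) * c i j ≤ ∑ i, p i * Real.log (p i) := by
  have hzero : ∑ i, ∑ j, (p i - q j) * c i j = 0 := by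
    simp only [sub_mul, Finset.sum_sub_distrib, mul_comm (p _), mul_comm (q _)]
    rw [Finset.sum_comm (f := fun i j => c i j * q j)]
    simp only [← Finset.sum_mul, sum_row_of_mem_doublyStochastic hc,
      sum_col_of_mem_doublyStochastic hc, one_mul, hpq, sub_self]
  have hdiag : ∑ i, p i * Real.log (p i) = ∑ i, ∑ j, p i * Real.log (p i) * c i j := by
    simp only [← Finset.mul_sum, sum_row_of_mem_doublyStochastic hc, mul_one]
  rw [hdiag, ← sub_nonneg, ← Finset.sum_sub_distrib, ← hzero]
  refine Finset.sum_le_sum fun i _ => ?_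
  rw [← Finset.sum_sub_distrib]
  refine Finset.sum_le_sum fun j _ => ?_
  rw [← sub_mul]
  exact mul_le_mul_of_nonneg_right (sub_le_mul_log_sub_mul_log (hp i) (hq j))
    (nonneg_of_mem_doublyStochastic hc)

lemma trace_mul_matLog_unitary_conj_diagonal {U : Matrix n n ℂ} (hU : U ∈ unitaryGroup n ℂ)
    (c : n → ℝ) :
    ((U * diagonal (fun i => (c i : ℂ)) * Uᴴ) *
        matLog (U * diagonal (fun i => (c i : ℂ)) * Uᴴ)).trace
      = ∑ i, c i * Real.log (c i) := by
  rw [matLog_unitary_conj_diagonal hU, unitary_conj_mul_unitary_conj hU, trace_unitary_conj hU,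
    diagonal_mul_diagonal, trace_diagonal]
  push_cast
  rfl

theorem relEnt_nonneg {A B : Matrix n n ℂ} (hA : A.PosSemidef) (hB : B.PosDef)
    (htr : A.trace = B.trace) : 0 ≤ relEnt A B := by
  obtain ⟨U, hU, p, hp, rfl⟩ := hA.exists_unitary_conj_diagonal
  obtain ⟨W, hW, q, hq, rfl⟩ := hB.exists_unitary_conj_diagonal
  have hpq : ∑ i, p i = ∑ j, q j := by
    simpa only [trace_unitary_conj hU, trace_unitary_conj hW, trace_diagonal,
      ← Complex.ofReal_sum, Complex.ofReal_inj] using htr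
  have hUW : Uᴴ * W ∈ unitaryGroup n ℂ := mul_mem (Unitary.star_mem hU) hW
  rw [relEnt, trace_mul_matLog_unitary_conj_diagonal hU, matLog_unitary_conj_diagonal hW,
    trace_unitary_conj_diagonal_mul hU, ← Complex.ofReal_sub, Complex.ofReal_re, sub_nonneg]
  exact sum_mul_log_le_of_mem_doublyStochastic (normSq_mem_doublyStochastic hUW) hp hq hpq

end Klein

section Entropy

variable {m n : Type*} [Fintype m] [DecidableEq m] [Fintype n] [DecidableEq n]

lemma matLog_unitary_conj {V A : Matrix n n ℂ} (hV : V ∈ unitaryGroup n ℂ) (hA : A.IsHermitian) :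
    matLog (V * A * Vᴴ) = V * matLog A * Vᴴ := by
  obtain ⟨U, hU, hAU⟩ := hA.exists_unitary_conj_diagonal
  have hVU : V * (U * diagonal (fun i => (hA.eigenvalues i : ℂ)) * Uᴴ) * Vᴴ
      = (V * U) * diagonal (fun i => (hA.eigenvalues i : ℂ)) * (V * U)ᴴ := by
    simp only [conjTranspose_mul, mul_assoc]
  rw [hAU, hVU, matLog_unitary_conj_diagonal (mul_mem hV hU), matLog_unitary_conj_diagonal hU]
  simp only [conjTranspose_mul, mul_assoc]

lemma vnEntropy_unitary_conj {V A : Matrix n n ℂ} (hV : V ∈ unitaryGroup n ℂ)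
    (hA : A.IsHermitian) : vnEntropy (V * A * Vᴴ) = vnEntropy A := by
  rw [vnEntropy, vnEntropy, matLog_unitary_conj hV hA, unitary_conj_mul_unitary_conj hV,
    trace_unitary_conj hV]

lemma unitary_conj_diagonal_kronecker (U : Matrix m m ℂ) (W : Matrix n n ℂ) (a : m → ℝ)
    (b : n → ℝ) :
    (U * diagonal (fun i => (a i : ℂ)) * Uᴴ) ⊗ₖ (W * diagonal (fun j => (b j : ℂ)) * Wᴴ)
      = (U ⊗ₖ W) * diagonal (fun ij : m × n => ((a ij.1 * b ij.2 : ℝ) : ℂ)) * (U ⊗ₖ W)ᴴ := by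
  rw [conjTranspose_kronecker, mul_kronecker_mul, mul_kronecker_mul,
    diagonal_kronecker_diagonal]
  push_cast
  rfl

lemma matLog_kronecker {A : Matrix m m ℂ} {B : Matrix n n ℂ} (hA : A.PosDef) (hB : B.PosDef) :
    matLog (A ⊗ₖ B) = matLog A ⊗ₖ 1 + 1 ⊗ₖ matLog B := by
  obtain ⟨U, hU, p, hp, rfl⟩ := hA.exists_unitary_conj_diagonal
  obtain ⟨W, hW, q, hq, rfl⟩ := hB.exists_unitary_conj_diagonal
  have hlog : diagonal (fun ij : m × n => (Real.log (p ij.1 * q ij.2) : ℂ))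
      = diagonal (fun i => (Real.log (p i) : ℂ)) ⊗ₖ 1
        + 1 ⊗ₖ diagonal (fun j => (Real.log (q j) : ℂ)) := by
    rw [← diagonal_one, ← diagonal_one, diagonal_kronecker_diagonal, diagonal_kronecker_diagonal,
      diagonal_add]
    congr 1
    ext ij
    rw [Real.log_mul (hp ij.1).ne' (hq ij.2).ne']
    push_cast
    ring
  have hUU : U * Uᴴ = 1 := hU.2
  have hWW : W * Wᴴ = 1 := hW.2
  rw [unitary_conj_diagonal_kronecker,
    matLog_unitary_conj_diagonal (kronecker_mem_unitary hU hW), matLog_unitary_conj_diagonal hU,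
    matLog_unitary_conj_diagonal hW, hlog, mul_add, add_mul, conjTranspose_kronecker]
  simp only [← mul_kronecker_mul, mul_one, hUU, hWW]

lemma vnEntropy_kronecker {A : Matrix m m ℂ} {B : Matrix n n ℂ} (hA : IsFaithfulDensityMatrix A)
    (hB : IsFaithfulDensityMatrix B) : vnEntropy (A ⊗ₖ B) = vnEntropy A + vnEntropy B := by
  simp only [vnEntropy, matLog_kronecker hA.1 hB.1, mul_add, ← mul_kronecker_mul, mul_one,
    trace_add, trace_kronecker, hA.2, hB.2, one_mul, neg_add, Complex.add_re]

end Entropy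

section PartialTrace

variable {d k : ℕ}

lemma trace_trA (X : Matrix (Fin d × Fin k) (Fin d × Fin k) ℂ) : (trA X).trace = X.trace := by
  simp [trA, trace, Fintype.sum_prod_type]

lemma trace_mul_kronecker_one (X : Matrix (Fin d × Fin k) (Fin d × Fin k) ℂ)
    (A : Matrix (Fin d) (Fin d) ℂ) : (X * (A ⊗ₖ (1 : Matrix (Fin k) (Fin k) ℂ))).trace
      = (trA X * A).trace := by
  simp only [trace, diag_apply, mul_apply, trA, of_apply, kroneckerMap_apply, one_apply,
    Fintype.sum_prod_type, Finset.sum_mul, mul_ite, mul_one, mul_zero, Finset.sum_ite_eq',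
    Finset.mem_univ, if_true]
  exact Finset.sum_congr rfl fun i _ => Finset.sum_comm

lemma trace_mul_one_kronecker (X : Matrix (Fin d × Fin k) (Fin d × Fin k) ℂ)
    (B : Matrix (Fin k) (Fin k) ℂ) : (X * ((1 : Matrix (Fin d) (Fin d) ℂ) ⊗ₖ B)).trace
      = (trS X * B).trace := by
  simp only [trace, diag_apply, mul_apply, trS, of_apply, kroneckerMap_apply, one_apply,
    Fintype.sum_prod_type, Finset.sum_mul, ite_mul, one_mul, zero_mul, mul_ite, mul_zero,
    Finset.sum_ite_irrel, Finset.sum_const_zero, Finset.sum_ite_eq', Finset.mem_univ, if_true]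
  rw [Finset.sum_comm]
  exact Finset.sum_congr rfl fun j _ => Finset.sum_comm

end PartialTrace

theorem entropy_increment_inequality_second_general {d k : ℕ}
    (V : Matrix (Fin d × Fin k) (Fin d × Fin k) ℂ)
    (hV : V ∈ Matrix.unitaryGroup (Fin d × Fin k) ℂ)
    (ρ : Matrix (Fin d) (Fin d) ℂ) (hρ : IsFaithfulDensityMatrix ρ)
    (σ : Matrix (Fin k) (Fin k) ℂ) (hσ : IsFaithfulDensityMatrix σ)
    (hρ' : (trA (V * (ρ ⊗ₖ σ) * Vᴴ)).PosDef) :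
    0 ≤ vnEntropy (trA (V * (ρ ⊗ₖ σ) * Vᴴ)) - vnEntropy ρ +
          (((σ - trS (V * (ρ ⊗ₖ σ) * Vᴴ)) * matLog σ).trace).re := by
  set ω := V * (ρ ⊗ₖ σ) * Vᴴ
  have hρσ : (ρ ⊗ₖ σ).PosDef := hρ.1.kronecker hσ.1
  have hω : vnEntropy ω = vnEntropy ρ + vnEntropy σ := by
    rw [vnEntropy_unitary_conj hV hρσ.isHermitian, vnEntropy_kronecker hρ hσ]
  have hcross : (ω * matLog (trA ω ⊗ₖ σ)).trace
      = (trA ω * matLog (trA ω)).trace + (trS ω * matLog σ).trace := by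
    rw [matLog_kronecker hρ' hσ.1, mul_add, trace_add, trace_mul_kronecker_one,
      trace_mul_one_kronecker]
  have htr : ω.trace = (trA ω ⊗ₖ σ).trace := by
    rw [trace_kronecker, trace_trA, hσ.2, mul_one]
  have hklein : 0 ≤ relEnt ω (trA ω ⊗ₖ σ) :=
    relEnt_nonneg (hρσ.posSemidef.mul_mul_conjTranspose_same V) (hρ'.kronecker hσ.1) htr
  simp only [relEnt, vnEntropy, hcross, sub_mul, trace_sub, Complex.sub_re, Complex.add_re,
    Complex.neg_re] at hklein hω ⊢
  linarith

/-- the second entropy-change inequality. -/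
theorem entropy_increment_inequality_second {d k : ℕ}
    (V : Matrix (Fin d × Fin k) (Fin d × Fin k) ℂ)
    (hV : V ∈ Matrix.unitaryGroup (Fin d × Fin k) ℂ)
    (ρ : Matrix (Fin d) (Fin d) ℂ) (hρ : IsFaithfulDensityMatrix ρ)
    (σ : Matrix (Fin k) (Fin k) ℂ) (hσ : IsFaithfulDensityMatrix σ)
    (hρ' : (trA (V * (ρ ⊗ₖ σ) * Vᴴ)).PosDef)
    (hF : (trS (V * (ρ ⊗ₖ σ) * Vᴴ)).PosDef) :
    0 ≤ vnEntropy (trA (V * (ρ ⊗ₖ σ) * Vᴴ)) - vnEntropy ρ +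
          (((σ - trS (V * (ρ ⊗ₖ σ) * Vᴴ)) * matLog σ).trace).re :=
  entropy_increment_inequality_second_general V hV ρ hρ σ hσ hρ'
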